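/- arXiv:2304.01728 — 2 statements merged into one kernel-verified Lean document; each statement's English description precedes it below -/
import Mathlib

section
/- For a bounded sesquilinear form b on U × V (U, V complex Hilbert spaces) satisfying the inf-sup condition with constant γ > 0 and such that {v : b(u,v)=0 ∀u} = {0}, the minimum-residual (DPG) solution u_h minimizing ‖B u - l‖_{V'} over a closed subspace U_h ⊆ U satisfies the quasi-optimality estimate ‖u - u_h‖_U ≤ (M/γ) inf_{w_h ∈ U_h} ‖u - w_h‖_U, where M is the continuity constant of b and u is the exact solution. -/
open scoped InnerProductSpace

/-- Quasi-optimality of the minimum-residual (DPG) solution. The test space `V` is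
identified with its dual via the Riesz map, so `B : U →L[ℂ] V` plays the role of
`R_V⁻¹ ∘ B : U → V` and `‖B w - l‖` is the dual (residual) norm. -/
theorem stmt1 {U V : Type*}
    [NormedAddCommGroup U] [InnerProductSpace ℂ U] [CompleteSpace U]
    [NormedAddCommGroup V] [InnerProductSpace ℂ V] [CompleteSpace V]
    (B : U →L[ℂ] V) (b : U → V → ℂ)
    (hb : ∀ u v, b u v = ⟪B u, v⟫_ℂ)
    (M γ : ℝ) (hγ : 0 < γ)
    (hM : ∀ u, ‖B u‖ ≤ M * ‖u‖)                     -- continuity of b with constant M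
    (hinfsup : ∀ u, γ * ‖u‖ ≤ ‖B u‖)                -- inf-sup condition with constant γ
    (hV : ∀ v : V, (∀ u, b u v = 0) → v = 0)        -- {v : b(u,v)=0 ∀u} = {0}
    (Uh : Submodule ℂ U) (hUh : IsClosed (Uh : Set U))
    (u : U) (l : V) (hl : B u = l)                  -- exact solution
    (uh : U) (huh : uh ∈ Uh)
    (hmin : ∀ w ∈ Uh, ‖B uh - l‖ ≤ ‖B w - l‖)       -- uh minimizes the residual over Uh
    : ∀ w ∈ Uh, ‖u - uh‖ ≤ (M / γ) * ‖u - w‖ := by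
  intro w hw
  have h1 : γ * ‖u - uh‖ ≤ ‖B (u - uh)‖ := hinfsup _
  have h2 : ‖B (u - uh)‖ = ‖B uh - l‖ := by
    rw [map_sub, hl, ← norm_neg, neg_sub]
  have h3 : ‖B w - l‖ = ‖B (u - w)‖ := by
    rw [map_sub, hl, ← norm_neg, neg_sub]
  have h4 : γ * ‖u - uh‖ ≤ M * ‖u - w‖ := by
    calc γ * ‖u - uh‖ ≤ ‖B (u - uh)‖ := h1
      _ = ‖B uh - l‖ := h2
      _ ≤ ‖B w - l‖ := hmin w hw
      _ = ‖B (u - w)‖ := h3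
      _ ≤ M * ‖u - w‖ := hM _
  rw [div_mul_eq_mul_div, le_div_iff₀ hγ, mul_comm]
  linarith
end

section
/- Residual minimization in the dual norm is equivalent to the mixed problem with optimal test functions: u_h ∈ U_h minimizes ‖Bu_h − l‖_{V'} if and only if b(u_h, R_V^{-1}(B w_h)) = l(R_V^{-1}(B w_h)) for all w_h ∈ U_h. -/
open scoped InnerProductSpace

/- Both sides say that `B uh` is the best approximation of `L` in the subspace `B(Uh)`:
minimality of the distance is equivalent to the residual `L - B uh` being orthogonal to
`B(Uh)`, and testing the residual against `B w` is exactly the mixed problem. -/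

theorem Submodule.forall_norm_sub_le_iff_inner_eq_zero {𝕜 E : Type*} [RCLike 𝕜]
    [NormedAddCommGroup E] [InnerProductSpace 𝕜 E] (K : Submodule 𝕜 E) {u v : E}
    (hv : v ∈ K) :
    (∀ w ∈ K, ‖u - v‖ ≤ ‖u - w‖) ↔ ∀ w ∈ K, ⟪u - v, w⟫_𝕜 = 0 := by
  rw [← K.norm_eq_iInf_iff_inner_eq_zero hv]
  have hbdd : BddBelow (Set.range fun w : K => ‖u - w‖) :=
    ⟨0, by rintro _ ⟨w, rfl⟩; positivity⟩
  constructor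
  · intro h
    exact le_antisymm (le_ciInf fun w => h w w.2) (ciInf_le hbdd ⟨v, hv⟩)
  · intro h w hw
    exact h ▸ ciInf_le hbdd ⟨w, hw⟩

/-- The test space `V` is identified with its dual via the Riesz map `R_V`, so
`B : U →L[ℂ] V` stands for `R_V⁻¹ ∘ B`, `L = R_V⁻¹ l`, and the optimal test function of a
trial function `w` is `B w = R_V⁻¹(B w)`. -/
theorem stmt3_general {U V : Type*}
    [NormedAddCommGroup U] [InnerProductSpace ℂ U]
    [NormedAddCommGroup V] [InnerProductSpace ℂ V]
    (B : U →L[ℂ] V) (b : U → V → ℂ)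
    (hb : ∀ u v, b u v = ⟪v, B u⟫_ℂ)          -- b(u,v) = (R_V⁻¹ B u, v)_V
    (L : V) (l : V → ℂ)
    (hl : ∀ v, l v = ⟪v, L⟫_ℂ)                -- l(v) = (R_V⁻¹ l, v)_V
    (Uh : Submodule ℂ U)
    (uh : U) (huh : uh ∈ Uh) :
    (∀ w ∈ Uh, ‖B uh - L‖ ≤ ‖B w - L‖) ↔ (∀ w ∈ Uh, b uh (B w) = l (B w)) := by
  let K : Submodule ℂ V := Uh.map (B : U →ₗ[ℂ] V)
  have forall_mem_K : ∀ {P : V → Prop}, (∀ v ∈ K, P v) ↔ ∀ w ∈ Uh, P (B w) := by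
    intro P
    simp only [K, ← SetLike.mem_coe, Submodule.map_coe, Set.forall_mem_image]
    rfl
  calc (∀ w ∈ Uh, ‖B uh - L‖ ≤ ‖B w - L‖)
      ↔ ∀ v ∈ K, ‖L - B uh‖ ≤ ‖L - v‖ := by simp only [forall_mem_K, norm_sub_rev L]
    _ ↔ ∀ v ∈ K, ⟪L - B uh, v⟫_ℂ = 0 :=
      K.forall_norm_sub_le_iff_inner_eq_zero (Submodule.mem_map_of_mem huh)
    _ ↔ ∀ w ∈ Uh, b uh (B w) = l (B w) := by
      simp only [forall_mem_K, inner_eq_zero_symm (x := L - B uh), inner_sub_right, sub_eq_zero,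
        hb, hl, eq_comm (a := ⟪_, L⟫_ℂ)]

/-- Residual minimization in the dual norm is equivalent to the mixed problem with
optimal test functions. The test space `V` is identified with its dual via the Riesz
map `R_V`, so `B : U →L[ℂ] V` stands for `R_V⁻¹ ∘ B`, `L = R_V⁻¹ l`, and the optimal
test function of a trial function `w` is `B w = R_V⁻¹(B w)`. -/
theorem stmt3 {U V : Type*}
    [NormedAddCommGroup U] [InnerProductSpace ℂ U] [CompleteSpace U]
    [NormedAddCommGroup V] [InnerProductSpace ℂ V] [CompleteSpace V]
    (B : U →L[ℂ] V) (b : U → V → ℂ)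
    (hb : ∀ u v, b u v = ⟪v, B u⟫_ℂ)          -- b(u,v) = (R_V⁻¹ B u, v)_V
    (L : V) (l : V → ℂ)
    (hl : ∀ v, l v = ⟪v, L⟫_ℂ)                -- l(v) = (R_V⁻¹ l, v)_V
    (Uh : Submodule ℂ U) [FiniteDimensional ℂ Uh]
    (uh : U) (huh : uh ∈ Uh) :
    (∀ w ∈ Uh, ‖B uh - L‖ ≤ ‖B w - L‖) ↔ (∀ w ∈ Uh, b uh (B w) = l (B w)) :=
  stmt3_general B b hb L l hl Uh uh huh
end
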